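/- For κ ∈ [-1,1] with |κ| ≥ κ₋ > 0, for all real c, u and every λ ∈ (0,1), exp_κ(c+u) ≤ λ^(1−1/κ₋) exp_κ(c) + (1−λ)^(1−1/κ₋) exp_κ(u). -/

import Mathlib

/-- The Kaniadakis κ-exponential: `exp_κ(u) = (κu + √(1+κ²u²))^(1/κ)`. -/
noncomputable def kexp (κ u : ℝ) : ℝ :=
  (κ * u + Real.sqrt (1 + κ ^ 2 * u ^ 2)) ^ (1 / κ)

lemma kexp_g_pos (κ u : ℝ) : 0 < κ * u + Real.sqrt (1 + κ ^ 2 * u ^ 2) := by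
  have h1 : Real.sqrt (κ ^ 2 * u ^ 2) < Real.sqrt (1 + κ ^ 2 * u ^ 2) :=
    Real.sqrt_lt_sqrt (by positivity) (by nlinarith)
  have h2 : Real.sqrt (κ ^ 2 * u ^ 2) = |κ * u| := by
    rw [show κ ^ 2 * u ^ 2 = (κ * u) ^ 2 by ring, Real.sqrt_sq_eq_abs]
  have h5 := neg_abs_le (κ * u)
  nlinarith [Real.sqrt_nonneg (1 + κ ^ 2 * u ^ 2)]

lemma kexp_neg (κ u : ℝ) : kexp (-κ) u = kexp κ u := by
  have hg := kexp_g_pos κ u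
  have hprod : (-κ * u + Real.sqrt (1 + (-κ) ^ 2 * u ^ 2)) =
      (κ * u + Real.sqrt (1 + κ ^ 2 * u ^ 2))⁻¹ := by
    apply eq_inv_of_mul_eq_one_left
    have hsq : Real.sqrt (1 + κ ^ 2 * u ^ 2) ^ 2 = 1 + κ ^ 2 * u ^ 2 :=
      Real.sq_sqrt (by positivity)
    have hne : (-κ) ^ 2 = κ ^ 2 := by ring
    rw [hne]
    nlinarith
  unfold kexp
  rw [hprod, show (1 : ℝ) / (-κ) = -(1 / κ) by ring,
    Real.rpow_neg (inv_nonneg.mpr hg.le), Real.inv_rpow hg.le, inv_inv]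

lemma sqrt_one_add_sq_convex (x y l m : ℝ) (hl : 0 ≤ l) (hm : 0 ≤ m)
    (hlm : l + m = 1) :
    Real.sqrt (1 + (l * x + m * y) ^ 2) ≤
      l * Real.sqrt (1 + x ^ 2) + m * Real.sqrt (1 + y ^ 2) := by
  set s := Real.sqrt (1 + x ^ 2) with hs
  set t := Real.sqrt (1 + y ^ 2) with ht
  have hs0 : 0 ≤ s := Real.sqrt_nonneg _
  have ht0 : 0 ≤ t := Real.sqrt_nonneg _
  have hs2 : s ^ 2 = 1 + x ^ 2 := Real.sq_sqrt (by positivity)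
  have ht2 : t ^ 2 = 1 + y ^ 2 := Real.sq_sqrt (by positivity)
  have hst : 1 + x * y ≤ s * t := by
    nlinarith [sq_nonneg (x - y), mul_nonneg hs0 ht0, sq_nonneg (s * t - (1 + x * y)),
      sq_nonneg (s * t + (1 + x * y))]
  have hrhs : 0 ≤ l * s + m * t := by positivity
  rw [show l * s + m * t = Real.sqrt ((l * s + m * t) ^ 2) from (Real.sqrt_sq hrhs).symm]
  apply Real.sqrt_le_sqrt
  calc 1 + (l * x + m * y) ^ 2
      = l ^ 2 * (1 + x ^ 2) + m ^ 2 * (1 + y ^ 2) + 2 * (l * m) * (1 + x * y) := by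
        linear_combination (-(l + m + 1)) * hlm
    _ ≤ l ^ 2 * (1 + x ^ 2) + m ^ 2 * (1 + y ^ 2) + 2 * (l * m) * (s * t) := by
        nlinarith [mul_le_mul_of_nonneg_left hst (mul_nonneg hl hm)]
    _ = (l * s + m * t) ^ 2 := by linear_combination (-(l^2)) * hs2 + (-(m^2)) * ht2

lemma kexp_g_scale (κ u l : ℝ) (h0 : 0 < l) (h1 : l ≤ 1) :
    κ * (u / l) + Real.sqrt (1 + κ ^ 2 * (u / l) ^ 2) ≤
      (κ * u + Real.sqrt (1 + κ ^ 2 * u ^ 2)) / l := by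
  have key : Real.sqrt (1 + κ ^ 2 * (u / l) ^ 2) ≤ Real.sqrt (1 + κ ^ 2 * u ^ 2) / l := by
    have e1 : (1 : ℝ) + κ ^ 2 * (u / l) ^ 2 = (l ^ 2 + κ ^ 2 * u ^ 2) / l ^ 2 := by
      field_simp
    have e2 : Real.sqrt (1 + κ ^ 2 * u ^ 2) / l = Real.sqrt ((1 + κ ^ 2 * u ^ 2) / l ^ 2) := by
      rw [Real.sqrt_div (by positivity), Real.sqrt_sq h0.le]
    rw [e1, e2]
    apply Real.sqrt_le_sqrt
    apply div_le_div_of_nonneg_right ?_ (by positivity)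
    · nlinarith [sq_nonneg κ, sq_nonneg u]
  have e3 : κ * (u / l) = κ * u / l := by ring
  rw [e3, add_div]
  exact (add_le_add_iff_left _).mpr key

lemma kexp_sum_bound_pos (κ κm : ℝ) (h0 : 0 < κ) (h1 : κ ≤ 1)
    (hκm : 0 < κm) (hlow : κm ≤ κ) :
    ∀ c u : ℝ, ∀ lam ∈ Set.Ioo (0 : ℝ) 1,
      kexp κ (c + u) ≤
        lam ^ (1 - 1 / κm) * kexp κ c + (1 - lam) ^ (1 - 1 / κm) * kexp κ u := by
  intro c u lam hlam
  obtain ⟨hl0, hl1⟩ := hlam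
  set l := lam
  set m := 1 - lam with hm
  have hm0 : 0 < m := by simp [hm]; linarith
  have hm1 : m ≤ 1 := by simp [hm]; linarith
  have hlm : l + m = 1 := by simp [hm, l]
  set p := 1 / κ with hp
  have hp1 : 1 ≤ p := by
    rw [hp, le_div_iff₀ h0]; linarith
  have hp0 : 0 ≤ p := by linarith
  set g : ℝ → ℝ := fun x => κ * x + Real.sqrt (1 + κ ^ 2 * x ^ 2) with hgdef
  have hgpos : ∀ x, 0 < g x := fun x => kexp_g_pos κ x
  -- convexity of g applied at c/l and u/m
  have hconv : g (c + u) ≤ l * g (c / l) + m * g (u / m) := by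
    have hx : l * (c / l) + m * (u / m) = c + u := by
      field_simp
    have := sqrt_one_add_sq_convex (κ * (c / l)) (κ * (u / m)) l m hl0.le hm0.le hlm
    have e1 : l * (κ * (c / l)) + m * (κ * (u / m)) = κ * (c + u) := by
      field_simp
    simp only [hgdef]
    have e2 : (1 : ℝ) + κ ^ 2 * (c + u) ^ 2 = 1 + (l * (κ * (c / l)) + m * (κ * (u / m))) ^ 2 := by
      rw [e1]; ring
    have e3 : (1 : ℝ) + κ ^ 2 * (c / l) ^ 2 = 1 + (κ * (c / l)) ^ 2 := by ring
    have e4 : (1 : ℝ) + κ ^ 2 * (u / m) ^ 2 = 1 + (κ * (u / m)) ^ 2 := by ring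
    rw [e2, e3, e4]
    nlinarith [this]
  -- rpow step
  have hrpow : kexp κ (c + u) ≤ l * (g (c / l)) ^ p + m * (g (u / m)) ^ p := by
    have step1 : (g (c + u)) ^ p ≤ (l * g (c / l) + m * g (u / m)) ^ p :=
      Real.rpow_le_rpow (hgpos _).le hconv hp0
    have step2 : (l * g (c / l) + m * g (u / m)) ^ p ≤ l * (g (c / l)) ^ p + m * (g (u / m)) ^ p := by
      have hcv := convexOn_rpow hp1
      have := hcv.2 (Set.mem_Ici.mpr (hgpos (c / l)).le) (Set.mem_Ici.mpr (hgpos (u / m)).le)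
        hl0.le hm0.le hlm
      simpa [smul_eq_mul] using this
    exact le_trans step1 step2
  -- scaling step
  have hscale : ∀ x : ℝ, ∀ a : ℝ, 0 < a → a ≤ 1 →
      a * (g (x / a)) ^ p ≤ a ^ (1 - 1 / κm) * kexp κ x := by
    intro x a ha0 ha1
    have h1' : (g (x / a)) ^ p ≤ (g x / a) ^ p :=
      Real.rpow_le_rpow (hgpos _).le (kexp_g_scale κ x a ha0 ha1) hp0
    have h2' : (g x / a) ^ p = (g x) ^ p / a ^ p := Real.div_rpow (hgpos x).le ha0.le p
    have h3' : a * ((g x) ^ p / a ^ p) = a ^ (1 - p) * (g x) ^ p := by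
      rw [Real.rpow_sub ha0, Real.rpow_one]
      field_simp
    have h4' : a ^ (1 - p) ≤ a ^ (1 - 1 / κm) := by
      apply Real.rpow_le_rpow_of_exponent_ge ha0 ha1
      have hpκm : p ≤ 1 / κm := one_div_le_one_div_of_le hκm hlow
      linarith
    calc a * (g (x / a)) ^ p ≤ a * ((g x) ^ p / a ^ p) := by
          rw [h2'] at h1'
          exact mul_le_mul_of_nonneg_left h1' ha0.le
      _ = a ^ (1 - p) * (g x) ^ p := h3'
      _ ≤ a ^ (1 - 1 / κm) * (g x) ^ p :=
          mul_le_mul_of_nonneg_right h4' (Real.rpow_nonneg (hgpos x).le p)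
      _ = a ^ (1 - 1 / κm) * kexp κ x := rfl
  calc kexp κ (c + u) ≤ l * (g (c / l)) ^ p + m * (g (u / m)) ^ p := hrpow
    _ ≤ l ^ (1 - 1 / κm) * kexp κ c + m ^ (1 - 1 / κm) * kexp κ u :=
        add_le_add (hscale c l hl0 hl1.le) (hscale u m hm0 hm1)

theorem kexp_sum_bound (κ κm : ℝ) (hκ : κ ∈ Set.Icc (-1 : ℝ) 1)
    (hκm : 0 < κm) (hlow : κm ≤ |κ|) :
    ∀ c u : ℝ, ∀ lam ∈ Set.Ioo (0 : ℝ) 1,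
      kexp κ (c + u) ≤
        lam ^ (1 - 1 / κm) * kexp κ c + (1 - lam) ^ (1 - 1 / κm) * kexp κ u := by
  obtain ⟨hκ1, hκ2⟩ := hκ
  rcases lt_trichotomy κ 0 with hneg | hzero | hpos
  · intro c u lam hlam
    have habs : |κ| = -κ := abs_of_neg hneg
    have h := kexp_sum_bound_pos (-κ) κm (by linarith) (by linarith)
      hκm (by rw [habs] at hlow; exact hlow) c u lam hlam
    simpa [kexp_neg κ] using h
  · exfalso; rw [hzero] at hlow; simp at hlow; linarith
  · intro c u lam hlam
    have habs : |κ| = κ := abs_of_pos hpos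
    exact kexp_sum_bound_pos κ κm hpos hκ2 hκm (habs ▸ hlow) c u lam hlam
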